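/- arXiv:2503.02129 — 4 statements merged into one kernel-verified Lean document; each statement's English description precedes it below -/
import Mathlib

section
/- For integers n ≥ m ≥ 2, the sum (1/m^n) · Σ_{k=1}^{n} C(n,k) (m-1)^k / k is at most 5/n. -/
theorem stmt_0 (n m : ℕ) (hm : 2 ≤ m) (hmn : m ≤ n) :
    (1 / (m : ℝ) ^ n) * ∑ k ∈ Finset.Icc 1 n,
      (n.choose k : ℝ) * ((m : ℝ) - 1) ^ k / k ≤ 5 / n := by
  have hn2 : 2 ≤ n := le_trans hm hmn
  have hnpos : (0:ℝ) < n := by exact_mod_cast Nat.lt_of_lt_of_le (by norm_num) hn2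
  have hm2 : (2:ℝ) ≤ (m:ℝ) := by exact_mod_cast hm
  set a : ℝ := (m:ℝ) - 1 with ha
  have ha1 : (1:ℝ) ≤ a := by simp [ha]; linarith
  have ha0 : (0:ℝ) < a := by linarith
  have hmpow : (0:ℝ) < (m:ℝ) ^ n := by positivity
  -- step 1: termwise bound
  have step1 : ∑ k ∈ Finset.Icc 1 n, (n.choose k : ℝ) * a ^ k / k
      ≤ ∑ k ∈ Finset.Icc 1 n, 2 / (n+1) * (((n+1).choose (k+1) : ℝ) * a ^ k) := by
    apply Finset.sum_le_sum
    intro k hk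
    simp only [Finset.mem_Icc] at hk
    have hk1 : (1:ℝ) ≤ (k:ℝ) := by exact_mod_cast hk.1
    have hident : ((n:ℝ)+1) * (n.choose k) = ((n+1).choose (k+1)) * ((k:ℝ)+1) := by
      exact_mod_cast Nat.add_one_mul_choose_eq n k
    have hak : (0:ℝ) ≤ a ^ k := by positivity
    have hch : (0:ℝ) ≤ ((n+1).choose (k+1) : ℝ) := by positivity
    rw [div_le_iff₀ (by linarith)]
    have hnn : (0:ℝ) < (n:ℝ)+1 := by linarith
    rw [div_mul_eq_mul_div, div_mul_eq_mul_div, le_div_iff₀ hnn]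
    nlinarith [mul_nonneg hch hak, mul_le_mul_of_nonneg_left hident.le hak]
  -- sum with constant factored
  rw [← Finset.mul_sum] at step1
  set T : ℝ := ∑ k ∈ Finset.Icc 1 n, (((n+1).choose (k+1) : ℝ) * a ^ k) with hT
  -- bound a * T
  have hreidx : a * T = ∑ j ∈ Finset.Icc 2 (n+1), (((n+1).choose j : ℝ) * a ^ j) := by
    rw [hT, Finset.mul_sum]
    rw [show Finset.Icc 2 (n+1) = (Finset.Icc 1 n).map (addRightEmbedding 1) by
      rw [Finset.map_add_right_Icc]]
    rw [Finset.sum_map]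
    apply Finset.sum_congr rfl
    intro k _
    simp [addRightEmbedding, pow_succ]
    ring
  have hbin : ∑ j ∈ Finset.range (n+2), (((n+1).choose j : ℝ) * a ^ j) = (m:ℝ) ^ (n+1) := by
    have := add_pow a 1 (n+1)
    simp only [one_pow, mul_one] at this
    have h1 : a + 1 = (m:ℝ) := by simp [ha]
    rw [← h1, this]
    apply Finset.sum_congr rfl
    intro j _
    ring
  have hsub : ∑ j ∈ Finset.Icc 2 (n+1), (((n+1).choose j : ℝ) * a ^ j)
      ≤ (m:ℝ) ^ (n+1) := by
    rw [← hbin]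
    apply Finset.sum_le_sum_of_subset_of_nonneg
    · intro j hj
      simp only [Finset.mem_Icc] at hj
      simp only [Finset.mem_range]
      omega
    · intro j _ _
      positivity
  have hTle : T ≤ 2 * (m:ℝ) ^ n := by
    have h1 : a * T ≤ (m:ℝ) ^ (n+1) := hreidx ▸ hsub
    have h2 : (m:ℝ) ^ (n+1) = (m:ℝ) * (m:ℝ) ^ n := by ring
    have h3 : (m:ℝ) ≤ 2 * a := by simp [ha]; linarith
    have h4 : a * T ≤ 2 * a * (m:ℝ) ^ n := by
      calc a * T ≤ (m:ℝ) * (m:ℝ) ^ n := by rw [← h2]; exact h1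
        _ ≤ 2 * a * (m:ℝ) ^ n := by nlinarith
    nlinarith
  -- combine
  have hS : ∑ k ∈ Finset.Icc 1 n, (n.choose k : ℝ) * a ^ k / k
      ≤ 2 / ((n:ℝ)+1) * (2 * (m:ℝ) ^ n) := by
    refine step1.trans ?_
    apply mul_le_mul_of_nonneg_left hTle (by positivity)
  rw [one_div, inv_mul_le_iff₀ hmpow]
  calc ∑ k ∈ Finset.Icc 1 n, (n.choose k : ℝ) * a ^ k / k
      ≤ 2 / ((n:ℝ)+1) * (2 * (m:ℝ) ^ n) := hS
    _ ≤ 5 / n * (m:ℝ) ^ n := by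
        rw [div_mul_eq_mul_div, div_mul_eq_mul_div, div_le_div_iff₀ (by linarith) hnpos]
        nlinarith
    _ = (m:ℝ) ^ n * (5 / n) := by ring
end

section
/- Maurey's approximation lemma: Let G be a subset of a Hilbert space H with ‖g‖ ≤ R for all g ∈ G. If f lies in the closed convex hull of G, then for every positive integer m and every ε > 0 there exist g_1, …, g_m ∈ G (with repetition allowed) such that ‖f − (1/m)·Σ_{i=1}^m g_i‖ ≤ (R + ε)/√m. -/
open Finset

local notation "⟪" x ", " y "⟫" => @inner ℝ _ _ x y

lemma exists_le_weighted {ι : Type*} (s : Finset ι) (w F : ι → ℝ)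
    (hw : ∀ j ∈ s, 0 ≤ w j) (h1 : ∑ j ∈ s, w j = 1) (c : ℝ)
    (hc : ∑ j ∈ s, w j * F j ≤ c) : ∃ j ∈ s, F j ≤ c := by
  by_contra h
  push_neg at h
  obtain ⟨j0, hj0, hwj0⟩ : ∃ j ∈ s, w j ≠ 0 := by
    by_contra h'
    push_neg at h'
    rw [Finset.sum_eq_zero h'] at h1
    norm_num at h1
  have hlt : ∑ j ∈ s, w j * c < ∑ j ∈ s, w j * F j := by
    apply Finset.sum_lt_sum
    · intro i hi
      exact mul_le_mul_of_nonneg_left (h i hi).le (hw i hi)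
    · exact ⟨j0, hj0, (mul_lt_mul_iff_right₀ ((hw j0 hj0).lt_of_ne (Ne.symm hwj0))).2 (h j0 hj0)⟩
  rw [← Finset.sum_mul, h1, one_mul] at hlt
  linarith

lemma norm_smul_add_smul_sq {H : Type*} [NormedAddCommGroup H] [InnerProductSpace ℝ H]
    (c d : ℝ) (u v : H) :
    ‖c • u + d • v‖ ^ 2 = c ^ 2 * ‖u‖ ^ 2 + 2 * c * d * ⟪u, v⟫ + d ^ 2 * ‖v‖ ^ 2 := by
  rw [norm_add_sq_real, real_inner_smul_left, real_inner_smul_right, norm_smul, norm_smul]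
  simp only [Real.norm_eq_abs, mul_pow, sq_abs]
  ring

lemma maurey_aux {H : Type*} [NormedAddCommGroup H] [InnerProductSpace ℝ H]
    {ι : Type*} (s : Finset ι) (w : ι → ℝ) (z : ι → H)
    (hw : ∀ j ∈ s, 0 ≤ w j) (h1 : ∑ j ∈ s, w j = 1)
    (R : ℝ) (hR : ∀ j ∈ s, ‖z j‖ ≤ R)
    (f' : H) (hf' : f' = ∑ j ∈ s, w j • z j) :
    ∀ k : ℕ, ∃ g : Fin k → H, (∀ i, ∃ j ∈ s, g i = z j) ∧
      (k : ℝ) * ‖f' - (1 / (k : ℝ)) • ∑ i, g i‖ ^ 2 ≤ R ^ 2 := by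
  intro k
  induction k with
  | zero =>
    exact ⟨Fin.elim0, fun i => i.elim0, by simpa using sq_nonneg R⟩
  | succ k ih =>
    obtain ⟨g, hg, hbound⟩ := ih
    set S : H := ∑ i, g i with hS
    set a : H := (1 / (k : ℝ)) • S with ha
    have hsum0 : ∑ j ∈ s, w j • (f' - z j) = (0 : H) := by
      simp only [smul_sub, Finset.sum_sub_distrib, ← Finset.sum_smul, h1, one_smul, ← hf',
        sub_self]
    have hinner0 : ∑ j ∈ s, w j * ⟪f' - a, f' - z j⟫ = 0 := by
      have h : ∑ j ∈ s, w j * ⟪f' - a, f' - z j⟫ = ⟪f' - a, ∑ j ∈ s, w j • (f' - z j)⟫ := by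
        rw [inner_sum]
        exact Finset.sum_congr rfl (fun j _ => (real_inner_smul_right _ _ _).symm)
      rw [h, hsum0, inner_zero_right]
    have hnorm : ∑ j ∈ s, w j * ‖f' - z j‖ ^ 2 ≤ R ^ 2 := by
      have hexp : ∀ j ∈ s, w j * ‖f' - z j‖ ^ 2 =
          w j * ‖f'‖ ^ 2 - 2 * (w j * ⟪f', z j⟫) + w j * ‖z j‖ ^ 2 := by
        intro j hj
        rw [norm_sub_sq_real]
        ring
      rw [Finset.sum_congr rfl hexp]
      have h2 : ∑ j ∈ s, w j * ⟪f', z j⟫ = ‖f'‖ ^ 2 := by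
        have h : ∑ j ∈ s, w j * ⟪f', z j⟫ = ⟪f', ∑ j ∈ s, w j • z j⟫ := by
          rw [inner_sum]
          exact Finset.sum_congr rfl (fun j _ => (real_inner_smul_right _ _ _).symm)
        rw [h, ← hf', real_inner_self_eq_norm_sq]
      have h3 : ∑ j ∈ s, w j * ‖z j‖ ^ 2 ≤ R ^ 2 := by
        calc ∑ j ∈ s, w j * ‖z j‖ ^ 2 ≤ ∑ j ∈ s, w j * R ^ 2 := by
              apply Finset.sum_le_sum
              intro j hj
              have h0 : (0:ℝ) ≤ ‖z j‖ := norm_nonneg _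
              have := hR j hj
              have : ‖z j‖ ^ 2 ≤ R ^ 2 := by nlinarith
              exact mul_le_mul_of_nonneg_left this (hw j hj)
          _ = R ^ 2 := by rw [← Finset.sum_mul, h1, one_mul]
      rw [Finset.sum_add_distrib, Finset.sum_sub_distrib, ← Finset.sum_mul, h1, one_mul,
        ← Finset.mul_sum, h2]
      nlinarith [sq_nonneg ‖f'‖]
    obtain ⟨j, hj, hFj⟩ := exists_le_weighted s w
      (fun j => 2 * (k : ℝ) * ⟪f' - a, f' - z j⟫ + ‖f' - z j‖ ^ 2) hw h1 (R ^ 2)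
      (by
        have : ∑ j ∈ s, w j * (2 * (k : ℝ) * ⟪f' - a, f' - z j⟫ + ‖f' - z j‖ ^ 2)
            = 2 * (k : ℝ) * (∑ j ∈ s, w j * ⟪f' - a, f' - z j⟫)
              + ∑ j ∈ s, w j * ‖f' - z j‖ ^ 2 := by
          rw [Finset.mul_sum, ← Finset.sum_add_distrib]
          congr 1; ext j; ring
        rw [this, hinner0]
        linarith)
    refine ⟨Fin.cons (z j) g, ?_, ?_⟩
    · intro i
      refine Fin.cases ?_ ?_ i
      · exact ⟨j, hj, rfl⟩
      · exact hg
    · have hsumc : ∑ i : Fin (k + 1), Fin.cons (z j) g i = z j + S := by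
        rw [Fin.sum_cons]
      rw [hsumc]
      have hcoef : ((k : ℝ) / (k + 1)) • a = (1 / ((k : ℝ) + 1)) • S := by
        rcases Nat.eq_zero_or_pos k with hk | hk
        · subst hk
          have : S = 0 := by simp [hS]
          simp [this]
        · have hk' : (k : ℝ) ≠ 0 := Nat.cast_ne_zero.2 hk.ne'
          rw [ha, smul_smul]
          congr 1
          field_simp
      have key : f' - (1 / ((k : ℝ) + 1)) • (z j + S)
          = ((k : ℝ) / (k + 1)) • (f' - a) + (1 / ((k : ℝ) + 1)) • (f' - z j) := by
        have hsum1 : (k : ℝ) / (k + 1) + 1 / ((k : ℝ) + 1) = 1 := by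
          have hk1 : ((k : ℝ) + 1) ≠ 0 := by positivity
          field_simp
        calc f' - (1 / ((k : ℝ) + 1)) • (z j + S)
            = ((k : ℝ) / (k + 1) + 1 / ((k : ℝ) + 1)) • f'
              - ((1 / ((k : ℝ) + 1)) • z j + (1 / ((k : ℝ) + 1)) • S) := by
              rw [hsum1, one_smul, smul_add]
          _ = ((k : ℝ) / (k + 1)) • (f' - a) + (1 / ((k : ℝ) + 1)) • (f' - z j) := by
              rw [smul_sub, smul_sub, hcoef, add_smul]
              abel
      have hcast : ((k + 1 : ℕ) : ℝ) = (k : ℝ) + 1 := by push_cast; ring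
      rw [hcast, key, norm_smul_add_smul_sq]
      set e := ‖f' - a‖ ^ 2 with he
      set p := ⟪f' - a, f' - z j⟫ with hp
      set q := ‖f' - z j‖ ^ 2 with hq
      have hK : (0 : ℝ) ≤ (k : ℝ) := Nat.cast_nonneg k
      have hk1 : (0 : ℝ) < (k : ℝ) + 1 := by positivity
      have he0 : 0 ≤ e := sq_nonneg _
      have hq0 : 0 ≤ q := sq_nonneg _
      have hbound' : (k : ℝ) * e ≤ R ^ 2 := hbound
      have hFj' : 2 * (k : ℝ) * p + q ≤ R ^ 2 := hFj
      have expand : ((k : ℝ) + 1) *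
          (((k : ℝ) / (k + 1)) ^ 2 * e + 2 * ((k : ℝ) / (k + 1)) * (1 / ((k : ℝ) + 1)) * p
            + (1 / ((k : ℝ) + 1)) ^ 2 * q)
          = ((k : ℝ) ^ 2 * e + 2 * (k : ℝ) * p + q) / ((k : ℝ) + 1) := by
        field_simp
      rw [expand]
      rw [div_le_iff₀ hk1]
      nlinarith [mul_le_mul_of_nonneg_left hbound' hK]

theorem stmt_4 {H : Type*} [NormedAddCommGroup H] [InnerProductSpace ℝ H]
    [CompleteSpace H]
    (G : Set H) (R : ℝ) (hG : ∀ g ∈ G, ‖g‖ ≤ R)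
    (f : H) (hf : f ∈ closure (convexHull ℝ G))
    (m : ℕ) (hm : 0 < m) (ε : ℝ) (hε : 0 < ε) :
    ∃ g : Fin m → H, (∀ i, g i ∈ G) ∧
      ‖f - (1 / (m : ℝ)) • ∑ i, g i‖ ≤ (R + ε) / Real.sqrt m := by
  have hm' : (0 : ℝ) < m := Nat.cast_pos.2 hm
  have hsm : 0 < Real.sqrt m := Real.sqrt_pos.2 hm'
  obtain ⟨f', hf'G, hdist⟩ : ∃ f' ∈ convexHull ℝ G, dist f f' < ε / Real.sqrt m :=
    Metric.mem_closure_iff.1 hf _ (by positivity)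
  rw [_root_.convexHull_eq] at hf'G
  obtain ⟨ι, t, w, z, hw0, hw1, hz, hcm⟩ := hf'G
  have hfeq : f' = ∑ j ∈ t, w j • z j := by
    rw [← hcm, Finset.centerMass_eq_of_sum_1 _ _ hw1]
  have hRz : ∀ j ∈ t, ‖z j‖ ≤ R := fun j hj => hG _ (hz j hj)
  have ht : t.Nonempty := by
    rcases Finset.eq_empty_or_nonempty t with h | h
    · subst h; simp at hw1
    · exact h
  have hR0 : 0 ≤ R := le_trans (norm_nonneg (z ht.choose)) (hRz _ ht.choose_spec)
  obtain ⟨g, hgt, hbound⟩ := maurey_aux t w z hw0 hw1 R hRz f' hfeq m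
  refine ⟨g, ?_, ?_⟩
  · intro i
    obtain ⟨j, hj, hij⟩ := hgt i
    rw [hij]
    exact hz j hj
  · set A : H := (1 / (m : ℝ)) • ∑ i, g i with hA
    have h1 : ‖f' - A‖ ≤ R / Real.sqrt m := by
      have hsq : ‖f' - A‖ ^ 2 ≤ R ^ 2 / m := by
        rw [le_div_iff₀ hm']
        linarith [hbound]
      have := Real.sqrt_le_sqrt hsq
      rwa [Real.sqrt_sq (norm_nonneg _), Real.sqrt_div (sq_nonneg R), Real.sqrt_sq hR0] at this
    have h2 : ‖f - f'‖ < ε / Real.sqrt m := by rwa [← dist_eq_norm]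
    have h3 : ‖f - A‖ ≤ ‖f - f'‖ + ‖f' - A‖ := by
      have : f - A = (f - f') + (f' - A) := by abel
      rw [this]
      exact norm_add_le _ _
    have : (R + ε) / Real.sqrt m = R / Real.sqrt m + ε / Real.sqrt m := by ring
    rw [this]
    linarith
end

section
/- Pointwise bound for deep networks: for an L-layer feedforward network f(x) = Σ a^L_{i_{L-1}} σ(Σ w^{L-1}_{i_{L-1} i_{L-2}} σ(⋯ σ(Σ w^1_{i_1 i_0} x_{i_0}))) with activation σ that is L_σ-Lipschitz with σ(0)=0, one has |f(x)| ≤ L_σ^{L-1} · ν(θ) · ‖x‖₂, where ν(θ) = Σ_{i_{L-1},…,i_1} |a^L_{i_{L-1}} w^{L-1}_{i_{L-1} i_{L-2}} ⋯ w²_{i_2 i_1}| · ‖w¹_{i_1}‖₂ is the path enhanced scaled variation norm. -/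
open scoped NNReal

/-- Forward pass of a multilayer network: `netHidden σ m w x l` is the vector of outputs of
the `l`-th layer (after applying the activation `σ`), with `netHidden _ _ _ x 0 = x`. -/
noncomputable def netHidden (σ : ℝ → ℝ) (m : ℕ → ℕ)
    (w : ∀ l, Matrix (Fin (m (l + 1))) (Fin (m l)) ℝ)
    (x : Fin (m 0) → ℝ) : (l : ℕ) → Fin (m l) → ℝ
  | 0 => x
  | l + 1 => fun i => σ (∑ j, w l i j * netHidden σ m w x l j)

/-- `pathVec m w l i` is the sum over all paths from the input to node `i` of layer `l+1`
of the product of the absolute values of the traversed weights (layers `2,…,l+1`) times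
the Euclidean norm of the corresponding first-layer weight row. -/
noncomputable def pathVec (m : ℕ → ℕ)
    (w : ∀ l, Matrix (Fin (m (l + 1))) (Fin (m l)) ℝ) :
    (l : ℕ) → Fin (m (l + 1)) → ℝ
  | 0 => fun i => Real.sqrt (∑ j, (w 0 i j) ^ 2)
  | l + 1 => fun i => ∑ j, |w (l + 1) i j| * pathVec m w l j

lemma sigma_abs_le {σ : ℝ → ℝ} {Lσ : ℝ≥0} (hσ : LipschitzWith Lσ σ) (hσ0 : σ 0 = 0)
    (t : ℝ) : |σ t| ≤ (Lσ : ℝ) * |t| := by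
  have := hσ.dist_le_mul t 0
  simpa [hσ0, Real.dist_eq] using this

lemma hidden_bound (σ : ℝ → ℝ) (Lσ : ℝ≥0) (hσ : LipschitzWith Lσ σ) (hσ0 : σ 0 = 0)
    (m : ℕ → ℕ) (w : ∀ l, Matrix (Fin (m (l + 1))) (Fin (m l)) ℝ)
    (x : EuclideanSpace ℝ (Fin (m 0))) :
    ∀ (l : ℕ) (i : Fin (m (l + 1))),
      |netHidden σ m w x (l + 1) i| ≤ (Lσ : ℝ) ^ (l + 1) * pathVec m w l i * ‖x‖ := by
  intro l
  induction l with
  | zero =>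
    intro i
    have h1 : |netHidden σ m w x 1 i| ≤ (Lσ : ℝ) * |∑ j, w 0 i j * x j| := by
      simpa [netHidden] using sigma_abs_le hσ hσ0 (∑ j, w 0 i j * x j)
    have hcs : |∑ j, w 0 i j * x j| ≤ Real.sqrt (∑ j, (w 0 i j) ^ 2) * ‖x‖ := by
      have hcs' := Real.sum_mul_le_sqrt_mul_sqrt Finset.univ (fun j => |w 0 i j|) (fun j => |x j|)
      calc |∑ j, w 0 i j * x j| ≤ ∑ j, |w 0 i j * x j| := Finset.abs_sum_le_sum_abs _ _
        _ = ∑ j, |w 0 i j| * |x j| := by simp [abs_mul]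
        _ ≤ Real.sqrt (∑ j, |w 0 i j| ^ 2) * Real.sqrt (∑ j, |x j| ^ 2) := hcs'
        _ = Real.sqrt (∑ j, (w 0 i j) ^ 2) * ‖x‖ := by
            rw [EuclideanSpace.norm_eq]
            simp [sq_abs]
    calc |netHidden σ m w x 1 i| ≤ (Lσ : ℝ) * (Real.sqrt (∑ j, (w 0 i j) ^ 2) * ‖x‖) :=
          h1.trans (by
            exact mul_le_mul_of_nonneg_left hcs Lσ.coe_nonneg)
      _ = (Lσ : ℝ) ^ (0 + 1) * pathVec m w 0 i * ‖x‖ := by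
          simp [pathVec, mul_assoc]
  | succ l ih =>
    intro i
    have h1 : |netHidden σ m w x (l + 2) i|
        ≤ (Lσ : ℝ) * |∑ j, w (l + 1) i j * netHidden σ m w x (l + 1) j| := by
      simpa [netHidden] using sigma_abs_le hσ hσ0 (∑ j, w (l + 1) i j * netHidden σ m w x (l + 1) j)
    have h2 : |∑ j, w (l + 1) i j * netHidden σ m w x (l + 1) j|
        ≤ ∑ j, |w (l + 1) i j| * ((Lσ : ℝ) ^ (l + 1) * pathVec m w l j * ‖x‖) := by
      calc |∑ j, w (l + 1) i j * netHidden σ m w x (l + 1) j|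
          ≤ ∑ j, |w (l + 1) i j * netHidden σ m w x (l + 1) j| := Finset.abs_sum_le_sum_abs _ _
        _ = ∑ j, |w (l + 1) i j| * |netHidden σ m w x (l + 1) j| := by simp [abs_mul]
        _ ≤ ∑ j, |w (l + 1) i j| * ((Lσ : ℝ) ^ (l + 1) * pathVec m w l j * ‖x‖) := by
            apply Finset.sum_le_sum
            intro j _
            exact mul_le_mul_of_nonneg_left (ih j) (abs_nonneg _)
    calc |netHidden σ m w x (l + 2) i|
        ≤ (Lσ : ℝ) * ∑ j, |w (l + 1) i j| * ((Lσ : ℝ) ^ (l + 1) * pathVec m w l j * ‖x‖) :=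
          h1.trans (mul_le_mul_of_nonneg_left h2 Lσ.coe_nonneg)
      _ = (Lσ : ℝ) ^ (l + 1 + 1) * pathVec m w (l + 1) i * ‖x‖ := by
          simp only [pathVec, Finset.mul_sum, Finset.sum_mul]
          apply Finset.sum_congr rfl
          intro j _
          ring

/-- Pointwise bound for a depth `L = K + 2` network:
`|f(x)| ≤ L_σ^{L-1} · ν(θ) · ‖x‖` where `ν` is the path enhanced scaled variation norm. -/
theorem stmt_11 (σ : ℝ → ℝ) (Lσ : ℝ≥0) (hσ : LipschitzWith Lσ σ) (hσ0 : σ 0 = 0)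
    (K : ℕ) (m : ℕ → ℕ) (w : ∀ l, Matrix (Fin (m (l + 1))) (Fin (m l)) ℝ)
    (a : Fin (m (K + 1)) → ℝ) (x : EuclideanSpace ℝ (Fin (m 0))) :
    |∑ i, a i * netHidden σ m w x (K + 1) i|
      ≤ (Lσ : ℝ) ^ (K + 1) * (∑ i, |a i| * pathVec m w K i) * ‖x‖ := by
  calc |∑ i, a i * netHidden σ m w x (K + 1) i|
      ≤ ∑ i, |a i| * |netHidden σ m w x (K + 1) i| := by
        refine (Finset.abs_sum_le_sum_abs _ _).trans ?_
        simp [abs_mul]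
    _ ≤ ∑ i, |a i| * ((Lσ : ℝ) ^ (K + 1) * pathVec m w K i * ‖x‖) := by
        apply Finset.sum_le_sum
        intro i _
        exact mul_le_mul_of_nonneg_left (hidden_bound σ Lσ hσ hσ0 m w x K i) (abs_nonneg _)
    _ = (Lσ : ℝ) ^ (K + 1) * (∑ i, |a i| * pathVec m w K i) * ‖x‖ := by
        rw [Finset.mul_sum, Finset.sum_mul]
        apply Finset.sum_congr rfl
        intro i _
        ring
end

section
/- Equivalence of path-norm and weight-decay regularization for ReLU: for a two-layer ReLU network g(x;θ) = Σ_{k=1}^m a_k σ(w_k^T x), the infimum over parameter rescalings (a_k, w_k) ↦ (a_k/c_k, c_k w_k), c_k > 0 (which leave g unchanged) of the ℓ² penalty Σ_k (a_k² + ‖w_k‖₂²)/2 equals the scaled variation norm Σ_k |a_k|·‖w_k‖₂. Consequently min over θ of the regularized empirical risk with penalty λΣ(a_k²+‖w_k‖²)/2 equals the min with penalty λΣ|a_k|‖w_k‖₂. -/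
private lemma amgm18 (x y : ℝ) : |x| * |y| ≤ (x ^ 2 + y ^ 2) / 2 := by
  nlinarith [sq_nonneg (|x| - |y|), sq_abs x, sq_abs y]

private lemma eqcase18 (A W : ℝ) (hA : A ≠ 0) (hW : 0 < W) :
    ((A / Real.sqrt (|A| / W)) ^ 2 + (Real.sqrt (|A| / W) * W) ^ 2) / 2 = |A| * W := by
  have h1 : 0 < |A| / W := div_pos (abs_pos.mpr hA) hW
  have h2 : Real.sqrt (|A| / W) ^ 2 = |A| / W := Real.sq_sqrt h1.le
  have h3 : Real.sqrt (|A| / W) ≠ 0 := by positivity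
  have hA2 : A ^ 2 = |A| ^ 2 := (sq_abs A).symm
  have hAa : (0:ℝ) < |A| := abs_pos.mpr hA
  set s := Real.sqrt (|A| / W) with hs
  have e1 : (A / s) ^ 2 = |A| * W := by
    rw [div_pow, h2, hA2, div_div_eq_mul_div, div_eq_iff (by positivity)]
    ring
  have e2 : (s * W) ^ 2 = |A| * W := by
    rw [mul_pow, h2, div_mul_eq_mul_div, div_eq_iff (by positivity)]
    ring
  rw [e1, e2]
  ring

set_option maxHeartbeats 2000000 in
theorem stmt_18 (d m n : ℕ) (hm : 0 < m)
    (x : Fin n → EuclideanSpace ℝ (Fin d)) (y : Fin n → ℝ) (lam : ℝ) (hlam : 0 < lam)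
    (a : Fin m → ℝ) (w : Fin m → EuclideanSpace ℝ (Fin d)) :
    (⨅ c : {c : Fin m → ℝ // ∀ k, 0 < c k},
        ∑ k, ((a k / (c : Fin m → ℝ) k) ^ 2 + ‖(c : Fin m → ℝ) k • w k‖ ^ 2) / 2)
      = ∑ k, |a k| * ‖w k‖ ∧
    (⨅ θ : (Fin m → ℝ) × (Fin m → EuclideanSpace ℝ (Fin d)),
        ((1 / (2 * (n : ℝ))) *
            ∑ i, (y i - ∑ k, θ.1 k * max (inner ℝ (θ.2 k) (x i) : ℝ) 0) ^ 2
          + lam * ∑ k, (θ.1 k ^ 2 + ‖θ.2 k‖ ^ 2) / 2))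
      = ⨅ θ : (Fin m → ℝ) × (Fin m → EuclideanSpace ℝ (Fin d)),
        ((1 / (2 * (n : ℝ))) *
            ∑ i, (y i - ∑ k, θ.1 k * max (inner ℝ (θ.2 k) (x i) : ℝ) 0) ^ 2
          + lam * ∑ k, |θ.1 k| * ‖θ.2 k‖) := by
  constructor
  · -- Part 1
    set f : {c : Fin m → ℝ // ∀ k, 0 < c k} → ℝ :=
      fun c => ∑ k, ((a k / (c : Fin m → ℝ) k) ^ 2 + ‖(c : Fin m → ℝ) k • w k‖ ^ 2) / 2 with hf
    have hbdd : BddBelow (Set.range f) := by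
      refine ⟨0, ?_⟩
      rintro _ ⟨c, rfl⟩
      apply Finset.sum_nonneg
      intro k _
      positivity
    apply le_antisymm
    · apply le_of_forall_pos_le_add
      intro ε hε
      set B : ℝ := ∑ k, (a k ^ 2 + ‖w k‖ ^ 2) with hB
      have hB0 : 0 ≤ B := Finset.sum_nonneg fun k _ => by positivity
      set t : ℝ := min 1 (ε / (B + 1)) with htdef
      have ht0 : 0 < t := lt_min one_pos (div_pos hε (by linarith))
      have ht1 : t ≤ 1 := min_le_left _ _
      set c : Fin m → ℝ := fun k =>
        if ‖w k‖ = 0 then 1 / t else if a k = 0 then t else Real.sqrt (|a k| / ‖w k‖) with hc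
      have hcpos : ∀ k, 0 < c k := by
        intro k
        simp only [hc]
        split_ifs with h1 h2
        · exact div_pos one_pos ht0
        · exact ht0
        · have hw : 0 < ‖w k‖ := lt_of_le_of_ne (norm_nonneg _) (Ne.symm h1)
          exact Real.sqrt_pos.mpr (div_pos (abs_pos.mpr h2) hw)
      have key := ciInf_le hbdd ⟨c, hcpos⟩
      refine key.trans ?_
      have hterm : ∀ k ∈ Finset.univ,
          ((a k / c k) ^ 2 + ‖c k • w k‖ ^ 2) / 2
            ≤ |a k| * ‖w k‖ + t * (a k ^ 2 + ‖w k‖ ^ 2) := by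
        intro k _
        have hnw : ‖c k • w k‖ = c k * ‖w k‖ := by
          rw [norm_smul, Real.norm_eq_abs, abs_of_pos (hcpos k)]
        rw [hnw]
        simp only [hc]
        split_ifs with h1 h2
        · rw [h1]
          have heq : (a k / (1 / t)) ^ 2 = a k ^ 2 * t ^ 2 := by
            field_simp
          rw [heq]
          have h2t : t ^ 2 ≤ t := by nlinarith
          nlinarith [mul_le_mul_of_nonneg_left h2t (sq_nonneg (a k)),
            abs_nonneg (a k), sq_nonneg (a k)]
        · rw [h2]
          have h2t : t ^ 2 ≤ t := by nlinarith
          simp only [zero_div, abs_zero, ne_eq]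
          nlinarith [mul_le_mul_of_nonneg_right h2t (sq_nonneg ‖w k‖),
            norm_nonneg (w k), sq_nonneg ‖w k‖]
        · have hW : 0 < ‖w k‖ := lt_of_le_of_ne (norm_nonneg _) (Ne.symm h1)
          rw [eqcase18 (a k) ‖w k‖ h2 hW]
          nlinarith [ht0.le, sq_nonneg (a k), sq_nonneg ‖w k‖]
      calc f ⟨c, hcpos⟩ ≤ ∑ k, (|a k| * ‖w k‖ + t * (a k ^ 2 + ‖w k‖ ^ 2)) :=
              Finset.sum_le_sum hterm
        _ = (∑ k, |a k| * ‖w k‖) + t * B := by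
              rw [Finset.sum_add_distrib, ← Finset.mul_sum]
        _ ≤ (∑ k, |a k| * ‖w k‖) + ε := by
              have : t * B ≤ ε := by
                have h1 : t ≤ ε / (B + 1) := min_le_right _ _
                have h2 : t * B ≤ (ε / (B + 1)) * B :=
                  mul_le_mul_of_nonneg_right h1 hB0
                have h3 : (ε / (B + 1)) * B ≤ ε := by
                  rw [div_mul_eq_mul_div, div_le_iff₀ (by positivity)]
                  nlinarith
                linarith
              linarith
    · haveI : Nonempty {c : Fin m → ℝ // ∀ k, 0 < c k} :=
        ⟨⟨fun _ => 1, fun _ => one_pos⟩⟩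
      apply le_ciInf
      rintro ⟨c, hc⟩
      apply Finset.sum_le_sum
      intro k _
      have hnw : ‖c k • w k‖ = c k * ‖w k‖ := by
        rw [norm_smul, Real.norm_eq_abs, abs_of_pos (hc k)]
      rw [hnw]
      have h := amgm18 (a k / c k) (c k * ‖w k‖)
      have he : |a k / c k| * |c k * ‖w k‖| = |a k| * ‖w k‖ := by
        rw [abs_div, abs_mul, abs_of_pos (hc k), abs_norm]
        field_simp [(hc k).ne']
      rw [he] at h
      exact h
  · -- Part 2
    set F : ((Fin m → ℝ) × (Fin m → EuclideanSpace ℝ (Fin d))) → ℝ :=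
      fun θ => (1 / (2 * (n : ℝ))) *
            ∑ i, (y i - ∑ k, θ.1 k * max (inner ℝ (θ.2 k) (x i) : ℝ) 0) ^ 2 with hF
    have hloss0 : ∀ θ, 0 ≤ F θ := by
      intro θ
      apply mul_nonneg (by positivity)
      exact Finset.sum_nonneg fun i _ => sq_nonneg _
    have hbdd1 : BddBelow (Set.range fun θ : (Fin m → ℝ) × (Fin m → EuclideanSpace ℝ (Fin d)) =>
        F θ + lam * ∑ k, (θ.1 k ^ 2 + ‖θ.2 k‖ ^ 2) / 2) := by
      refine ⟨0, ?_⟩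
      rintro _ ⟨θ, rfl⟩
      have : 0 ≤ ∑ k, (θ.1 k ^ 2 + ‖θ.2 k‖ ^ 2) / 2 :=
        Finset.sum_nonneg fun k _ => by positivity
      have := hloss0 θ
      positivity
    have hbdd2 : BddBelow (Set.range fun θ : (Fin m → ℝ) × (Fin m → EuclideanSpace ℝ (Fin d)) =>
        F θ + lam * ∑ k, |θ.1 k| * ‖θ.2 k‖) := by
      refine ⟨0, ?_⟩
      rintro _ ⟨θ, rfl⟩
      have : 0 ≤ ∑ k, |θ.1 k| * ‖θ.2 k‖ :=
        Finset.sum_nonneg fun k _ => mul_nonneg (abs_nonneg _) (norm_nonneg _)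
      have := hloss0 θ
      positivity
    apply le_antisymm
    · apply le_ciInf
      intro θ
      set c : Fin m → ℝ := fun k => Real.sqrt (|θ.1 k| / ‖θ.2 k‖) with hcdef
      set θ' : (Fin m → ℝ) × (Fin m → EuclideanSpace ℝ (Fin d)) :=
        (fun k => if θ.1 k = 0 ∨ ‖θ.2 k‖ = 0 then 0 else θ.1 k / c k,
         fun k => if θ.1 k = 0 ∨ ‖θ.2 k‖ = 0 then 0 else c k • θ.2 k) with hθ'
      have hcpos : ∀ k, θ.1 k ≠ 0 → ‖θ.2 k‖ ≠ 0 → 0 < c k := by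
        intro k h1 h2
        have hW : 0 < ‖θ.2 k‖ := lt_of_le_of_ne (norm_nonneg _) (Ne.symm h2)
        have : 0 < |θ.1 k| / ‖θ.2 k‖ := div_pos (abs_pos.mpr h1) hW
        simpa [hcdef] using Real.sqrt_pos.mpr this
      have hpt : ∀ (k : Fin m) (X : EuclideanSpace ℝ (Fin d)),
          θ'.1 k * max ((inner ℝ (θ'.2 k) X : ℝ)) 0
            = θ.1 k * max ((inner ℝ (θ.2 k) X : ℝ)) 0 := by
        intro k X
        show (if θ.1 k = 0 ∨ ‖θ.2 k‖ = 0 then (0:ℝ) else θ.1 k / c k)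
            * max ((inner ℝ (if θ.1 k = 0 ∨ ‖θ.2 k‖ = 0 then (0 : EuclideanSpace ℝ (Fin d))
                else c k • θ.2 k) X : ℝ)) 0 = _
        split_ifs with h
        · rcases h with h | h
          · simp [h]
          · have hw0 : θ.2 k = 0 := norm_eq_zero.mp h
            simp [hw0]
        · push_neg at h
          obtain ⟨h1, h2⟩ := h
          have hck : 0 < c k := hcpos k h1 h2
          rw [real_inner_smul_left]
          have hmax : (c k * (inner ℝ (θ.2 k) X : ℝ)) ⊔ 0
              = c k * ((inner ℝ (θ.2 k) X : ℝ) ⊔ 0) := by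
            rw [mul_max_of_nonneg _ _ hck.le, mul_zero]
          rw [hmax, ← mul_assoc]
          congr 1
          field_simp
      have hloss : F θ' = F θ := by
        simp only [hF]
        congr 1
        apply Finset.sum_congr rfl
        intro i _
        have hS : ∑ k, θ'.1 k * max ((inner ℝ (θ'.2 k) (x i) : ℝ)) 0
            = ∑ k, θ.1 k * max ((inner ℝ (θ.2 k) (x i) : ℝ)) 0 :=
          Finset.sum_congr rfl fun k _ => hpt k (x i)
        rw [hS]
      have hpen : ∑ k, (θ'.1 k ^ 2 + ‖θ'.2 k‖ ^ 2) / 2 = ∑ k, |θ.1 k| * ‖θ.2 k‖ := by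
        apply Finset.sum_congr rfl
        intro k _
        simp only [hθ']
        split_ifs with h
        · rcases h with h | h <;> simp [h]
        · push_neg at h
          obtain ⟨h1, h2⟩ := h
          have hck : 0 < c k := hcpos k h1 h2
          have hW : 0 < ‖θ.2 k‖ := lt_of_le_of_ne (norm_nonneg _) (Ne.symm h2)
          have hnw : ‖c k • θ.2 k‖ = c k * ‖θ.2 k‖ := by
            rw [norm_smul, Real.norm_eq_abs, abs_of_pos hck]
          rw [hnw, hcdef]
          exact eqcase18 (θ.1 k) ‖θ.2 k‖ h1 hW
      have key := ciInf_le hbdd1 θ'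
      refine key.trans ?_
      rw [hloss, hpen]
    · apply le_ciInf
      intro θ
      have key := ciInf_le hbdd2 θ
      refine key.trans ?_
      have : ∑ k, |θ.1 k| * ‖θ.2 k‖ ≤ ∑ k, (θ.1 k ^ 2 + ‖θ.2 k‖ ^ 2) / 2 := by
        apply Finset.sum_le_sum
        intro k _
        have h := amgm18 (θ.1 k) ‖θ.2 k‖
        rwa [abs_norm] at h
      have hl := mul_le_mul_of_nonneg_left this hlam.le
      simp only [hF]
      linarith
end
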